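/- arXiv:hep-th/9412207 — 2 statements merged into one kernel-verified Lean document; each statement's English description precedes it below -/
import Mathlib

section
/- Converse: suppose W(a,b,c,d,z) ∈ Hom(V[d−a]⊗V[c−d], V[c−b]⊗V[b−a]) satisfy the star-triangle relation and the unitarity Σ_g W(a,g,c,d,z) W(a,b,c,g,−z) = δ_{bd} Id. Then R(z,λ) := Σ_{a,b,c,d : a+c = λ/η} W(a,b,c,d,z) E[d−a] ⊗ E[c−d] is a generalized quantum R-matrix: it is weight-zero, unitary, and satisfies the modified Yang–Baxter equation. -/
open Matrix Filter Topology
open scoped BigOperators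

noncomputable section

/- The Cartan subalgebra `𝔥` is identified with `ℂ^m = Fin m → ℂ` via an
orthonormal basis `(h_ν)`; a diagonalizable `𝔥`-module is a space `ℂ^ι`
together with a weight function `wt : ι → (Fin m → ℂ)`; `λ ∈ 𝔥` acts on the
basis vector `i` by the scalar `⟨wt i, λ⟩ = Σ_ν (wt i) ν * λ ν`. -/

variable {m : ℕ}

/-- pairing `⟨μ, X⟩` of a weight with an element of `𝔥`. -/
def pairH (μ X : Fin m → ℂ) : ℂ := ∑ ν, μ ν * X ν

section Emb

variable {α β γ : Type*} [Fintype α] [Fintype β] [Fintype γ]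
variable [DecidableEq α] [DecidableEq β] [DecidableEq γ]

/-- `F(λ + c h^{(3)})` acting on factors 1,2 of a triple tensor product:
`f(λ + c h^{(k)}) = Σ_μ P_μ^{(k)} f(λ + c μ)` via the weight projections. -/
def emb12sh (wt : γ → (Fin m → ℂ)) (c : ℂ)
    (F : (Fin m → ℂ) → Matrix (α × β) (α × β) ℂ) (lam : Fin m → ℂ) :
    Matrix (α × β × γ) (α × β × γ) ℂ :=
  fun p q => F (lam + c • wt p.2.2) (p.1, p.2.1) (q.1, q.2.1) *
    (if p.2.2 = q.2.2 then 1 else 0)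

/-- `F(λ + c h^{(2)})` acting on factors 1,3. -/
def emb13sh (wt : β → (Fin m → ℂ)) (c : ℂ)
    (F : (Fin m → ℂ) → Matrix (α × γ) (α × γ) ℂ) (lam : Fin m → ℂ) :
    Matrix (α × β × γ) (α × β × γ) ℂ :=
  fun p q => F (lam + c • wt p.2.1) (p.1, p.2.2) (q.1, q.2.2) *
    (if p.2.1 = q.2.1 then 1 else 0)

/-- `F(λ + c h^{(1)})` acting on factors 2,3. -/
def emb23sh (wt : α → (Fin m → ℂ)) (c : ℂ)
    (F : (Fin m → ℂ) → Matrix (β × γ) (β × γ) ℂ) (lam : Fin m → ℂ) :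
    Matrix (α × β × γ) (α × β × γ) ℂ :=
  fun p q => F (lam + c • wt p.1) (p.2.1, p.2.2) (q.2.1, q.2.2) *
    (if p.1 = q.1 then 1 else 0)

/-- plain (unshifted) embedding into factors 1,2. -/
def emb12p (M : Matrix (α × β) (α × β) ℂ) : Matrix (α × β × γ) (α × β × γ) ℂ :=
  fun p q => M (p.1, p.2.1) (q.1, q.2.1) * (if p.2.2 = q.2.2 then 1 else 0)

/-- plain embedding into factors 1,3. -/
def emb13p (M : Matrix (α × γ) (α × γ) ℂ) : Matrix (α × β × γ) (α × β × γ) ℂ :=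
  fun p q => M (p.1, p.2.2) (q.1, q.2.2) * (if p.2.1 = q.2.1 then 1 else 0)

/-- plain embedding into factors 2,3. -/
def emb23p (M : Matrix (β × γ) (β × γ) ℂ) : Matrix (α × β × γ) (α × β × γ) ℂ :=
  fun p q => M (p.2.1, p.2.2) (q.2.1, q.2.2) * (if p.1 = q.1 then 1 else 0)

/-- weight-zero condition on a matrix on a two-fold tensor product:
`[X^{(1)} + X^{(2)}, F] = 0` for all `X ∈ 𝔥`. -/
def WeightZero2 (wtA : α → (Fin m → ℂ)) (wtB : β → (Fin m → ℂ))
    (F : Matrix (α × β) (α × β) ℂ) : Prop :=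
  ∀ X : Fin m → ℂ,
    Matrix.diagonal (fun p : α × β => pairH (wtA p.1) X + pairH (wtB p.2) X) * F =
    F * Matrix.diagonal (fun p : α × β => pairH (wtA p.1) X + pairH (wtB p.2) X)

end Emb

section RMat

variable {ι : Type*} [Fintype ι] [DecidableEq ι]

/-- the flip `P` of `V ⊗ V`. -/
def flipP : Matrix (ι × ι) (ι × ι) ℂ := fun p q => if p.1 = q.2 ∧ p.2 = q.1 then 1 else 0

/-- the modified (dynamical) Yang–Baxter equation
`R^{(12)}(z₁₂,λ+ηh^{(3)}) R^{(13)}(z₁₃,λ−ηh^{(2)}) R^{(23)}(z₂₃,λ+ηh^{(1)}) =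
 R^{(23)}(z₂₃,λ−ηh^{(1)}) R^{(13)}(z₁₃,λ+ηh^{(2)}) R^{(12)}(z₁₂,λ−ηh^{(3)})`. -/
def MYBE (wt : ι → (Fin m → ℂ)) (η : ℂ)
    (R : ℂ → (Fin m → ℂ) → Matrix (ι × ι) (ι × ι) ℂ) : Prop :=
  ∀ z₁ z₂ z₃ lam,
    emb12sh wt η (R (z₁ - z₂)) lam * emb13sh wt (-η) (R (z₁ - z₃)) lam *
        emb23sh wt η (R (z₂ - z₃)) lam =
      emb23sh wt (-η) (R (z₂ - z₃)) lam * emb13sh wt η (R (z₁ - z₃)) lam *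
        emb12sh wt (-η) (R (z₁ - z₂)) lam

/-- unitarity `R^{(12)}(z,λ) R^{(21)}(−z,λ) = Id`. -/
def RUnitary (R : ℂ → (Fin m → ℂ) → Matrix (ι × ι) (ι × ι) ℂ) : Prop :=
  ∀ z lam, R z lam * (flipP * R (-z) lam * flipP) = 1

/-- a generalized quantum R-matrix: a weight-zero unitary solution of the
modified Yang–Baxter equation. -/
def IsGenR (wt : ι → (Fin m → ℂ)) (η : ℂ)
    (R : ℂ → (Fin m → ℂ) → Matrix (ι × ι) (ι × ι) ℂ) : Prop :=
  MYBE wt η R ∧ RUnitary R ∧ ∀ z lam, WeightZero2 wt wt (R z lam)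

end RMat

section Rep

variable {ι κ : Type*} [Fintype ι] [DecidableEq ι] [Fintype κ] [DecidableEq κ]

/-- the RLL relation defining representations of the elliptic quantum group
`A(R)`:
`R^{(12)}(z₁₂,λ+ηh^{(3)}) L^{(13)}(z₁,λ−ηh^{(2)}) L^{(23)}(z₂,λ+ηh^{(1)}) =
 L^{(23)}(z₂,λ−ηh^{(1)}) L^{(13)}(z₁,λ+ηh^{(2)}) R^{(12)}(z₁₂,λ−ηh^{(3)})`
in `End(V ⊗ V ⊗ W)`. -/
def RLL (wt : ι → (Fin m → ℂ)) (wtW : κ → (Fin m → ℂ)) (η : ℂ)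
    (R : ℂ → (Fin m → ℂ) → Matrix (ι × ι) (ι × ι) ℂ)
    (L : ℂ → (Fin m → ℂ) → Matrix (ι × κ) (ι × κ) ℂ) : Prop :=
  ∀ z₁ z₂ lam,
    emb12sh wtW η (R (z₁ - z₂)) lam * emb13sh wt (-η) (L z₁) lam *
        emb23sh wt η (L z₂) lam =
      emb23sh wt (-η) (L z₂) lam * emb13sh wt η (L z₁) lam *
        emb12sh wtW (-η) (R (z₁ - z₂)) lam

/-- a representation of `A(R)`: a weight-zero `L`-operator satisfying `RLL`. -/
def IsRep (wt : ι → (Fin m → ℂ)) (wtW : κ → (Fin m → ℂ)) (η : ℂ)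
    (R : ℂ → (Fin m → ℂ) → Matrix (ι × ι) (ι × ι) ℂ)
    (L : ℂ → (Fin m → ℂ) → Matrix (ι × κ) (ι × κ) ℂ) : Prop :=
  RLL wt wtW η R L ∧ ∀ z lam, WeightZero2 wt wtW (L z lam)

end Rep

section Face

variable {ι : Type*} [Fintype ι] [DecidableEq ι]

/-- the projection `E[μ] ⊗ E[ν]` onto `V[μ] ⊗ V[ν]` inside `V ⊗ V`. -/
def projK (wt : ι → (Fin m → ℂ)) (μ ν : Fin m → ℂ) :
    Matrix (ι × ι) (ι × ι) ℂ :=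
  Matrix.diagonal (fun p =>
    (if wt p.1 = μ then 1 else 0) * (if wt p.2 = ν then 1 else 0))

/-- the face (Boltzmann) weight
`W(a,b,c,d,z,λ) = (E[c−b]⊗E[b−a]) R(z, λ+ηa+ηc)|_{V[d−a]⊗V[c−d]}`. -/
def face (wt : ι → (Fin m → ℂ)) (η : ℂ)
    (R : ℂ → (Fin m → ℂ) → Matrix (ι × ι) (ι × ι) ℂ)
    (a b c d : Fin m → ℂ) (z : ℂ) (lam : Fin m → ℂ) :
    Matrix (ι × ι) (ι × ι) ℂ :=
  projK wt (c - b) (b - a) * R z (lam + η • a + η • c) * projK wt (d - a) (c - d)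

/-- the face weight at `λ = 0`: `W(a,b,c,d,z) = W(a,b,c,d,z,0)`. -/
def face0 (wt : ι → (Fin m → ℂ)) (η : ℂ)
    (R : ℂ → (Fin m → ℂ) → Matrix (ι × ι) (ι × ι) ℂ)
    (a b c d : Fin m → ℂ) (z : ℂ) : Matrix (ι × ι) (ι × ι) ℂ :=
  face wt η R a b c d z 0

end Face

/-! Each `W(a,b,c,d,z)` maps `V[d-a] ⊗ V[c-d]` into `V[c-b] ⊗ V[b-a]`, so the matrix entry
`R(z,λ)_{pq}` is the entry of the single face weight `W(a,b,c,d,z)` whose heights are read off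
from `a + c = λ/η` and the weights of `p` and `q`; in particular `R` is weight zero.
An entry of either side of the modified Yang–Baxter equation is a sum over three internal
indices. When all three factors of a summand conserve weight, the shifts of `λ` turn it into the
corresponding summand of the star-triangle relation around the hexagon `a, b, c, d, e, f`
determined by `λ` and the outer indices, the internal height `g` being fixed by the internal
indices; otherwise both vanish. Unitarity reduces in the same way to the unitarity of `W`. -/

section Embedding

variable {α β γ : Type*} [Fintype α] [Fintype β] [Fintype γ]
  [DecidableEq α] [DecidableEq β] [DecidableEq γ]

theorem emb12sh_mul_emb13sh_mul_emb23sh_apply (wtα : α → Fin m → ℂ) (wtβ : β → Fin m → ℂ)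
    (wtγ : γ → Fin m → ℂ) (c₁ c₂ c₃ : ℂ) (F : (Fin m → ℂ) → Matrix (α × β) (α × β) ℂ)
    (G : (Fin m → ℂ) → Matrix (α × γ) (α × γ) ℂ) (H : (Fin m → ℂ) → Matrix (β × γ) (β × γ) ℂ)
    (lam : Fin m → ℂ) (p s : α × β × γ) :
    (emb12sh wtγ c₁ F lam * emb13sh wtβ c₂ G lam * emb23sh wtα c₃ H lam) p s =
      ∑ j, ∑ k, ∑ i, F (lam + c₁ • wtγ p.2.2) (p.1, p.2.1) (i, j) *
        G (lam + c₂ • wtβ j) (i, p.2.2) (s.1, k) *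
          H (lam + c₃ • wtα s.1) (j, k) (s.2.1, s.2.2) := by
  simp [Matrix.mul_apply, Fintype.sum_prod_type, emb12sh, emb13sh, emb23sh, Finset.sum_mul,
    mul_assoc]

theorem emb23sh_mul_emb13sh_mul_emb12sh_apply (wtα : α → Fin m → ℂ) (wtβ : β → Fin m → ℂ)
    (wtγ : γ → Fin m → ℂ) (c₁ c₂ c₃ : ℂ) (F : (Fin m → ℂ) → Matrix (α × β) (α × β) ℂ)
    (G : (Fin m → ℂ) → Matrix (α × γ) (α × γ) ℂ) (H : (Fin m → ℂ) → Matrix (β × γ) (β × γ) ℂ)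
    (lam : Fin m → ℂ) (p s : α × β × γ) :
    (emb23sh wtα c₁ H lam * emb13sh wtβ c₂ G lam * emb12sh wtγ c₃ F lam) p s =
      ∑ i, ∑ j, ∑ k, H (lam + c₁ • wtα p.1) (p.2.1, p.2.2) (j, k) *
        G (lam + c₂ • wtβ j) (p.1, k) (i, s.2.2) *
          F (lam + c₃ • wtγ s.2.2) (i, j) (s.1, s.2.1) := by
  simp [Matrix.mul_apply, Fintype.sum_prod_type, emb12sh, emb13sh, emb23sh, Finset.sum_mul,
    mul_assoc]

theorem emb12p_mul_emb13p_mul_emb23p_apply (F : Matrix (α × β) (α × β) ℂ)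
    (G : Matrix (α × γ) (α × γ) ℂ) (H : Matrix (β × γ) (β × γ) ℂ) (p s : α × β × γ) :
    (emb12p F * emb13p G * emb23p H : Matrix (α × β × γ) (α × β × γ) ℂ) p s =
      ∑ j, ∑ k, ∑ i, F (p.1, p.2.1) (i, j) * G (i, p.2.2) (s.1, k) * H (j, k) (s.2.1, s.2.2) := by
  simp [Matrix.mul_apply, Fintype.sum_prod_type, emb12p, emb13p, emb23p, Finset.sum_mul,
    mul_assoc]

theorem emb23p_mul_emb13p_mul_emb12p_apply (F : Matrix (α × β) (α × β) ℂ)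
    (G : Matrix (α × γ) (α × γ) ℂ) (H : Matrix (β × γ) (β × γ) ℂ) (p s : α × β × γ) :
    (emb23p H * emb13p G * emb12p F : Matrix (α × β × γ) (α × β × γ) ℂ) p s =
      ∑ i, ∑ j, ∑ k, H (p.2.1, p.2.2) (j, k) * G (p.1, k) (i, s.2.2) * F (i, j) (s.1, s.2.1) := by
  simp [Matrix.mul_apply, Fintype.sum_prod_type, emb12p, emb13p, emb23p, Finset.sum_mul,
    mul_assoc]

end Embedding

theorem pairH_add (μ ν X : Fin m → ℂ) : pairH (μ + ν) X = pairH μ X + pairH ν X := by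
  simp [pairH, add_mul, Finset.sum_add_distrib]

section FaceModel

variable {ι : Type*} [Fintype ι] [DecidableEq ι]

theorem flipP_mul_mul_flipP_apply (M : Matrix (ι × ι) (ι × ι) ℂ) (p q : ι × ι) :
    (flipP * M * flipP : Matrix (ι × ι) (ι × ι) ℂ) p q = M p.swap q.swap := by
  simp [Matrix.mul_apply, flipP, Fintype.sum_prod_type, Prod.swap, ite_and, Finset.sum_ite_irrel]

theorem projK_mul_mul_projK_apply (wt : ι → Fin m → ℂ) (μ ν μ' ν' : Fin m → ℂ)
    (M : Matrix (ι × ι) (ι × ι) ℂ) (p q : ι × ι) :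
    (projK wt μ ν * M * projK wt μ' ν') p q =
      if wt p.1 = μ ∧ wt p.2 = ν ∧ wt q.1 = μ' ∧ wt q.2 = ν' then M p q else 0 := by
  simp only [projK, Matrix.mul_diagonal, Matrix.diagonal_mul]
  split_ifs <;> simp_all

variable (wt : ι → Fin m → ℂ) (η : ℂ)
  (W : (Fin m → ℂ) → (Fin m → ℂ) → (Fin m → ℂ) → (Fin m → ℂ) → ℂ → Matrix (ι × ι) (ι × ι) ℂ)

def FaceSupported : Prop :=
  ∀ a b c d z, W a b c d z =
    projK wt (c - b) (b - a) * W a b c d z * projK wt (d - a) (c - d)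

/-- The sum over the faces `(a, b, c, d)` with `a + c = λ / η`, parametrized by
`μ₁ = d - a`, `μ₂ = c - d`, `μ₃ = c - b`. -/
def faceR (z : ℂ) (lam : Fin m → ℂ) : Matrix (ι × ι) (ι × ι) ℂ :=
  ∑ μ₁ ∈ Finset.univ.image wt, ∑ μ₂ ∈ Finset.univ.image wt,
    ∑ μ₃ ∈ Finset.univ.image wt,
      W ((2:ℂ)⁻¹ • (η⁻¹ • lam - μ₁ - μ₂))
        (((2:ℂ)⁻¹ • (η⁻¹ • lam - μ₁ - μ₂)) + μ₁ + μ₂ - μ₃)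
        (((2:ℂ)⁻¹ • (η⁻¹ • lam - μ₁ - μ₂)) + μ₁ + μ₂)
        (((2:ℂ)⁻¹ • (η⁻¹ • lam - μ₁ - μ₂)) + μ₁) z *
        projK wt μ₁ μ₂

variable {wt W}

theorem FaceSupported.apply_eq_zero (hW : FaceSupported wt W) {a b c d : Fin m → ℂ} {z : ℂ}
    {p q : ι × ι} (h : ¬(wt p.1 = c - b ∧ wt p.2 = b - a ∧ wt q.1 = d - a ∧ wt q.2 = c - d)) :
    W a b c d z p q = 0 := by
  rw [hW, projK_mul_mul_projK_apply, if_neg h]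

theorem FaceSupported.apply_eq_zero_of_add_ne (hW : FaceSupported wt W)
    {a b c d : Fin m → ℂ} {z : ℂ} {p q : ι × ι} (h : wt p.1 + wt p.2 ≠ wt q.1 + wt q.2) :
    W a b c d z p q = 0 :=
  hW.apply_eq_zero fun ⟨h₁, h₂, h₃, h₄⟩ => h (by rw [h₁, h₂, h₃, h₄]; abel)

theorem faceR_apply (hW : FaceSupported wt W) (z : ℂ) (lam : Fin m → ℂ) (p q : ι × ι) :
    faceR wt η W z lam p q =
      W ((2:ℂ)⁻¹ • (η⁻¹ • lam - wt q.1 - wt q.2))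
        ((2:ℂ)⁻¹ • (η⁻¹ • lam - wt q.1 - wt q.2) + wt q.1 + wt q.2 - wt p.1)
        ((2:ℂ)⁻¹ • (η⁻¹ • lam - wt q.1 - wt q.2) + wt q.1 + wt q.2)
        ((2:ℂ)⁻¹ • (η⁻¹ • lam - wt q.1 - wt q.2) + wt q.1) z p q := by
  have hmem : ∀ i, wt i ∈ Finset.univ.image wt := fun i =>
    Finset.mem_image_of_mem wt (Finset.mem_univ i)
  simp only [faceR, Matrix.sum_apply, projK, Matrix.mul_diagonal, mul_ite, mul_one, mul_zero,
    Finset.sum_ite_irrel, Finset.sum_const_zero, Finset.sum_ite_eq, hmem, if_true]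
  refine Finset.sum_eq_single_of_mem (wt p.1) (hmem p.1) fun μ₃ _ hμ₃ => ?_
  exact hW.apply_eq_zero fun h => hμ₃ (by rw [h.1]; abel)

theorem faceR_apply_of_add_eq (hW : FaceSupported wt W) {a b c d : Fin m → ℂ} {z : ℂ}
    {lam : Fin m → ℂ} {p q : ι × ι} (hac : a + c = η⁻¹ • lam) (hcb : c - b = wt p.1)
    (hda : d - a = wt q.1) (hcd : c - d = wt q.2) :
    faceR wt η W z lam p q = W a b c d z p q := by
  have ha : (2:ℂ)⁻¹ • (η⁻¹ • lam - wt q.1 - wt q.2) = a := by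
    rw [← hac, ← hda, ← hcd]; module
  rw [faceR_apply η hW, ha, ← hcb, ← hda, ← hcd]
  congr 1 <;> abel

theorem faceR_apply_eq_zero (hW : FaceSupported wt W) {z : ℂ} {lam : Fin m → ℂ} {p q : ι × ι}
    (h : wt p.1 + wt p.2 ≠ wt q.1 + wt q.2) : faceR wt η W z lam p q = 0 := by
  rw [faceR_apply η hW, hW.apply_eq_zero_of_add_ne h]

theorem weightZero2_faceR (hW : FaceSupported wt W) (z : ℂ) (lam : Fin m → ℂ) :
    WeightZero2 wt wt (faceR wt η W z lam) := by
  intro X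
  ext p q
  simp only [Matrix.diagonal_mul, Matrix.mul_diagonal]
  by_cases h : wt p.1 + wt p.2 = wt q.1 + wt q.2
  · rw [← pairH_add, ← pairH_add, h, mul_comm]
  · rw [faceR_apply_eq_zero η hW h, zero_mul, mul_zero]

variable (wt W) in
def FaceUnitary : Prop :=
  ∀ (a b c d : Fin m → ℂ) (z : ℂ),
    ∑ g ∈ Finset.univ.image (fun i => a + wt i),
        (flipP * W a b c g (-z) * flipP) * W a g c d z =
      if b = d then projK wt (d - a) (c - d) else 0

theorem rUnitary_faceR (hW : FaceSupported wt W) (hunit : FaceUnitary wt W) :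
    RUnitary (faceR wt η W) := by
  intro z lam
  rw [mul_eq_one_comm]
  ext p r
  obtain ⟨a, c, hac, hca⟩ : ∃ a c : Fin m → ℂ, a + c = η⁻¹ • lam ∧ c - a = wt r.1 + wt r.2 :=
    ⟨(2:ℂ)⁻¹ • (η⁻¹ • lam - (wt r.1 + wt r.2)), (2:ℂ)⁻¹ • (η⁻¹ • lam + (wt r.1 + wt r.2)),
      by module, by module⟩
  obtain ⟨b, hcb⟩ : ∃ b, c - b = wt p.2 := ⟨c - wt p.2, sub_sub_cancel _ _⟩
  obtain ⟨d, hcd⟩ : ∃ d, c - d = wt r.2 := ⟨c - wt r.2, sub_sub_cancel _ _⟩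
  have hda : d - a = wt r.1 := by linear_combination (norm := module) hca - hcd
  have hterm : ∀ q : ι × ι, faceR wt η W (-z) lam p.swap q.swap * faceR wt η W z lam q r =
      ∑ g ∈ Finset.univ.image (fun i => a + wt i),
        W a b c g (-z) p.swap q.swap * W a g c d z q r := by
    intro q
    by_cases hq : wt q.1 + wt q.2 = wt r.1 + wt r.2
    · have hcg : c - (a + wt q.2) = wt q.1 := by linear_combination (norm := module) hca - hq
      rw [faceR_apply_of_add_eq η hW (d := a + wt q.2) hac hcb (add_sub_cancel_left _ _) hcg,
        faceR_apply_of_add_eq η hW hac hcg hda hcd,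
        Finset.sum_eq_single_of_mem (a + wt q.2)
          (Finset.mem_image_of_mem (fun i => a + wt i) (Finset.mem_univ q.2))]
      intro g _ hg
      exact mul_eq_zero_of_right _ (hW.apply_eq_zero fun h => hg (by rw [h.2.1]; abel))
    · rw [faceR_apply_eq_zero η hW hq, mul_zero]
      refine (Finset.sum_eq_zero fun g _ => mul_eq_zero_of_right _ (hW.apply_eq_zero ?_)).symm
      rintro ⟨h₁, h₂, -, -⟩
      exact hq (by rw [h₁, h₂, ← hca]; abel)
  calc _ = ∑ q, faceR wt η W (-z) lam p.swap q.swap * faceR wt η W z lam q r := by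
        simp only [Matrix.mul_apply (M := flipP * _ * _), flipP_mul_mul_flipP_apply]
    _ = (∑ g ∈ Finset.univ.image (fun i => a + wt i),
          (flipP * W a b c g (-z) * flipP) * W a g c d z : Matrix (ι × ι) (ι × ι) ℂ) p r := by
        simp only [Finset.sum_congr rfl fun q _ => hterm q, Matrix.sum_apply,
          Matrix.mul_apply (M := flipP * _ * _), flipP_mul_mul_flipP_apply]
        exact Finset.sum_comm
    _ = _ := by
        rw [hunit]
        by_cases hpr : p = r
        · subst hpr
          have hbd : b = d := by rw [← sub_right_inj (a := c), hcb, hcd]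
          simp [hbd, projK, hda, hcd]
        · split_ifs <;> simp [projK, Matrix.one_apply_ne hpr, Matrix.diagonal_apply_ne _ hpr]

variable (wt W) in
def StarTriangle : Prop :=
  ∀ (a b c d e f : Fin m → ℂ) (z₁ z₂ z₃ : ℂ),
      (∑ g ∈ (Finset.univ.image fun i => b + wt i) ∪
          (Finset.univ.image fun i => a + wt i),
          emb12p (W b c d g (z₁ - z₂)) * emb13p (W a b g f (z₁ - z₃)) *
            emb23p (W f g d e (z₂ - z₃))) *
        Matrix.diagonal (fun p : ι × ι × ι =>
          ((if wt p.1 = f - a then 1 else 0) *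
            (if wt p.2.1 = e - f then 1 else 0) *
            (if wt p.2.2 = d - e then 1 else 0) : ℂ)) =
      (∑ g ∈ (Finset.univ.image fun i => b + wt i) ∪
          (Finset.univ.image fun i => a + wt i),
          emb23p (W a b c g (z₂ - z₃)) * emb13p (W g c d e (z₁ - z₃)) *
            emb12p (W a g e f (z₁ - z₂))) *
        Matrix.diagonal (fun p : ι × ι × ι =>
          ((if wt p.1 = f - a then 1 else 0) *
            (if wt p.2.1 = e - f then 1 else 0) *
            (if wt p.2.2 = d - e then 1 else 0) : ℂ))

section Hexagon

variable {a b c d e f lam : Fin m → ℂ} {p s : ι × ι × ι}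

theorem faceR_mul_faceR_mul_faceR_eq_sum_left (hη : η ≠ 0) (hW : FaceSupported wt W)
    (hda : a + d = η⁻¹ • lam) (hfa : f - a = wt s.1) (hef : e - f = wt s.2.1)
    (hde : d - e = wt s.2.2) (hdc : d - c = wt p.1) (hcb : c - b = wt p.2.1)
    (z₁₂ z₁₃ z₂₃ : ℂ) (i j k : ι) :
    faceR wt η W z₁₂ (lam + η • wt p.2.2) (p.1, p.2.1) (i, j) *
        faceR wt η W z₁₃ (lam + (-η) • wt j) (i, p.2.2) (s.1, k) *
        faceR wt η W z₂₃ (lam + η • wt s.1) (j, k) (s.2.1, s.2.2) =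
      ∑ g ∈ (Finset.univ.image fun i => b + wt i) ∪ (Finset.univ.image fun i => a + wt i),
        W b c d g z₁₂ (p.1, p.2.1) (i, j) * W a b g f z₁₃ (i, p.2.2) (s.1, k) *
          W f g d e z₂₃ (j, k) (s.2.1, s.2.2) := by
  by_cases hA : wt p.1 + wt p.2.1 = wt i + wt j
  swap
  · simp [faceR_apply_eq_zero η hW, hW.apply_eq_zero_of_add_ne, hA]
  by_cases hB : wt i + wt p.2.2 = wt s.1 + wt k
  swap
  · simp [faceR_apply_eq_zero η hW, hW.apply_eq_zero_of_add_ne, hB]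
  by_cases hC : wt j + wt k = wt s.2.1 + wt s.2.2
  swap
  · simp [faceR_apply_eq_zero η hW, hW.apply_eq_zero_of_add_ne, hC]
  have hdg : d - (b + wt i) = wt j := by linear_combination (norm := module) hdc + hcb + hA
  rw [faceR_apply_of_add_eq η hW (b := c) (c := d) (d := b + wt i) ?_ hdc
      (add_sub_cancel_left _ _) hdg,
    faceR_apply_of_add_eq η hW (b := b) (c := b + wt i) ?_ (add_sub_cancel_left _ _) hfa ?_,
    faceR_apply_of_add_eq η hW (b := b + wt i) ?_ hdg hef hde,
    Finset.sum_eq_single_of_mem (b + wt i)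
      (Finset.mem_union_left _ (Finset.mem_image_of_mem (fun i => b + wt i) (Finset.mem_univ i)))]
  · intro g _ hg
    rw [hW.apply_eq_zero fun h => hg (by rw [show wt i = g - b from h.2.2.1]; abel), zero_mul,
      zero_mul]
  all_goals simp only [smul_add, neg_smul, smul_neg, inv_smul_smul₀ hη]
  · linear_combination (norm := module) hda + hfa
  · linear_combination (norm := module) hda - hdc - hcb - hA
  · linear_combination (norm := module) hef + hde - hdc - hcb - hA - hC
  · linear_combination (norm := module) hda + hfa + hef + hde - hdc - hcb - hA - hB - hC

theorem faceR_mul_faceR_mul_faceR_eq_sum_right (hη : η ≠ 0) (hW : FaceSupported wt W)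
    (hda : a + d = η⁻¹ • lam) (hfa : f - a = wt s.1) (hef : e - f = wt s.2.1)
    (hde : d - e = wt s.2.2) (hdc : d - c = wt p.1) (hcb : c - b = wt p.2.1)
    (z₁₂ z₁₃ z₂₃ : ℂ) (i j k : ι) :
    faceR wt η W z₂₃ (lam + (-η) • wt p.1) (p.2.1, p.2.2) (j, k) *
        faceR wt η W z₁₃ (lam + η • wt j) (p.1, k) (i, s.2.2) *
        faceR wt η W z₁₂ (lam + (-η) • wt s.2.2) (i, j) (s.1, s.2.1) =
      ∑ g ∈ (Finset.univ.image fun i => b + wt i) ∪ (Finset.univ.image fun i => a + wt i),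
        W a b c g z₂₃ (p.2.1, p.2.2) (j, k) * W g c d e z₁₃ (p.1, k) (i, s.2.2) *
          W a g e f z₁₂ (i, j) (s.1, s.2.1) := by
  by_cases hA : wt p.2.1 + wt p.2.2 = wt j + wt k
  swap
  · simp [faceR_apply_eq_zero η hW, hW.apply_eq_zero_of_add_ne, hA]
  by_cases hB : wt p.1 + wt k = wt i + wt s.2.2
  swap
  · simp [faceR_apply_eq_zero η hW, hW.apply_eq_zero_of_add_ne, hB]
  by_cases hC : wt i + wt j = wt s.1 + wt s.2.1
  swap
  · simp [faceR_apply_eq_zero η hW, hW.apply_eq_zero_of_add_ne, hC]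
  have hcg : c - (a + wt j) = wt k := by
    linear_combination (norm := module) hfa + hef + hde - hdc - hB - hC
  have heg : e - (a + wt j) = wt i := by linear_combination (norm := module) hfa + hef - hC
  rw [faceR_apply_of_add_eq η hW (b := b) (d := a + wt j) ?_ hcb (add_sub_cancel_left _ _) hcg,
    faceR_apply_of_add_eq η hW (a := a + wt j) (b := c) (p := (p.1, k))
      (q := (i, s.2.2)) ?_ hdc heg hde,
    faceR_apply_of_add_eq η hW (b := a + wt j) ?_ heg hfa hef,
    Finset.sum_eq_single_of_mem (a + wt j)
      (Finset.mem_union_right _ (Finset.mem_image_of_mem (fun i => a + wt i) (Finset.mem_univ j)))]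
  · intro g _ hg
    rw [hW.apply_eq_zero fun h => hg (by rw [show wt j = g - a from h.2.2.1]; abel), zero_mul,
      zero_mul]
  all_goals simp only [smul_add, neg_smul, smul_neg, inv_smul_smul₀ hη]
  · linear_combination (norm := module) hda - hde
  · linear_combination (norm := module) hda
  · linear_combination (norm := module) hda - hdc

end Hexagon

theorem mybe_faceR (hη : η ≠ 0) (hW : FaceSupported wt W) (hSTR : StarTriangle wt W) :
    MYBE wt η (faceR wt η W) := by
  intro z₁ z₂ z₃ lam
  ext p s
  obtain ⟨a, d, hda, hsum⟩ : ∃ a d : Fin m → ℂ,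
      a + d = η⁻¹ • lam ∧ d - a = wt s.1 + wt s.2.1 + wt s.2.2 :=
    ⟨(2:ℂ)⁻¹ • (η⁻¹ • lam - (wt s.1 + wt s.2.1 + wt s.2.2)),
      (2:ℂ)⁻¹ • (η⁻¹ • lam + (wt s.1 + wt s.2.1 + wt s.2.2)), by module, by module⟩
  obtain ⟨f, hfa⟩ : ∃ f, f - a = wt s.1 := ⟨a + wt s.1, add_sub_cancel_left _ _⟩
  obtain ⟨e, hef⟩ : ∃ e, e - f = wt s.2.1 := ⟨f + wt s.2.1, add_sub_cancel_left _ _⟩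
  have hde : d - e = wt s.2.2 := by linear_combination (norm := module) hsum - hfa - hef
  obtain ⟨c, hdc⟩ : ∃ c, d - c = wt p.1 := ⟨d - wt p.1, sub_sub_cancel _ _⟩
  obtain ⟨b, hcb⟩ : ∃ b, c - b = wt p.2.1 := ⟨c - wt p.2.1, sub_sub_cancel _ _⟩
  have key := congrFun (congrFun (hSTR a b c d e f z₁ z₂ z₃) p) s
  simp only [Matrix.mul_diagonal, Matrix.sum_apply, emb12p_mul_emb13p_mul_emb23p_apply,
    emb23p_mul_emb13p_mul_emb12p_apply, ← hfa, ← hef, ← hde, if_true, mul_one] at key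
  calc _ = _ := emb12sh_mul_emb13sh_mul_emb23sh_apply ..
    _ = _ := by simp only [faceR_mul_faceR_mul_faceR_eq_sum_left η hη hW hda hfa hef hde hdc hcb]
    _ = _ := (Finset.sum_comm.trans (Finset.sum_congr rfl fun j _ => Finset.sum_comm.trans
          (Finset.sum_congr rfl fun k _ => Finset.sum_comm))).symm
    _ = _ := key
    _ = _ := Finset.sum_comm.trans (Finset.sum_congr rfl fun i _ => Finset.sum_comm.trans
          (Finset.sum_congr rfl fun j _ => Finset.sum_comm))
    _ = _ := by simp only [faceR_mul_faceR_mul_faceR_eq_sum_right η hη hW hda hfa hef hde hdc hcb]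
    _ = _ := (emb23sh_mul_emb13sh_mul_emb12sh_apply ..).symm

end FaceModel

/-- converse: from a solution `W(a,b,c,d,z)` of the
star-triangle relation satisfying the unitarity
`Σ_g W(a,g,c,d,z) W(a,b,c,g,−z) = δ_{bd}`, the formula
`R(z,λ) = Σ_{a,b,c,d : a+c = λ/η} W(a,b,c,d,z) E(d−a) ⊗ E(c−d)`
defines a generalized quantum R-matrix: it is weight zero, unitary, and
satisfies the modified Yang–Baxter equation. -/
theorem genR_of_star_triangle
    {ι : Type*} [Fintype ι] [DecidableEq ι]
    (wt : ι → (Fin m → ℂ)) (η : ℂ) (hη : η ≠ 0)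
    (W : (Fin m → ℂ) → (Fin m → ℂ) → (Fin m → ℂ) → (Fin m → ℂ) → ℂ →
      Matrix (ι × ι) (ι × ι) ℂ)
    -- `W(a,b,c,d,z) ∈ Hom(V[d−a]⊗V[c−d], V[c−b]⊗V[b−a])`:
    (hsupp : ∀ a b c d z, W a b c d z =
      projK wt (c - b) (b - a) * W a b c d z * projK wt (d - a) (c - d))
    -- the star-triangle relation on `V[f−a]⊗V[e−f]⊗V[d−e]`:
    (hSTR : ∀ (a b c d e f : Fin m → ℂ) (z₁ z₂ z₃ : ℂ),
      (∑ g ∈ (Finset.univ.image fun i => b + wt i) ∪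
          (Finset.univ.image fun i => a + wt i),
          emb12p (W b c d g (z₁ - z₂)) * emb13p (W a b g f (z₁ - z₃)) *
            emb23p (W f g d e (z₂ - z₃))) *
        Matrix.diagonal (fun p : ι × ι × ι =>
          ((if wt p.1 = f - a then 1 else 0) *
            (if wt p.2.1 = e - f then 1 else 0) *
            (if wt p.2.2 = d - e then 1 else 0) : ℂ)) =
      (∑ g ∈ (Finset.univ.image fun i => b + wt i) ∪
          (Finset.univ.image fun i => a + wt i),
          emb23p (W a b c g (z₂ - z₃)) * emb13p (W g c d e (z₁ - z₃)) *
            emb12p (W a g e f (z₁ - z₂))) *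
        Matrix.diagonal (fun p : ι × ι × ι =>
          ((if wt p.1 = f - a then 1 else 0) *
            (if wt p.2.1 = e - f then 1 else 0) *
            (if wt p.2.2 = d - e then 1 else 0) : ℂ)))
    -- unitarity `Σ_g W(a,g,c,d,z)W(a,b,c,g,−z) = δ_{bd}`:
    (hunit : ∀ (a b c d : Fin m → ℂ) (z : ℂ),
      ∑ g ∈ Finset.univ.image (fun i => a + wt i),
          (flipP * W a b c g (-z) * flipP) * W a g c d z =
        if b = d then projK wt (d - a) (c - d) else 0) :
    IsGenR wt η (fun z lam =>
      ∑ μ₁ ∈ Finset.univ.image wt, ∑ μ₂ ∈ Finset.univ.image wt,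
        ∑ μ₃ ∈ Finset.univ.image wt,
          W ((2:ℂ)⁻¹ • (η⁻¹ • lam - μ₁ - μ₂))
            (((2:ℂ)⁻¹ • (η⁻¹ • lam - μ₁ - μ₂)) + μ₁ + μ₂ - μ₃)
            (((2:ℂ)⁻¹ • (η⁻¹ • lam - μ₁ - μ₂)) + μ₁ + μ₂)
            (((2:ℂ)⁻¹ • (η⁻¹ • lam - μ₁ - μ₂)) + μ₁) z *
            projK wt μ₁ μ₂) :=
  ⟨mybe_faceR η hη hsupp hSTR, rUnitary_faceR η hsupp hunit, weightZero2_faceR η hsupp⟩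
end
end

section
/- Unitarity of face weights from unitarity of R: if R(z,λ) R^{(21)}(−z,λ) = Id_{V⊗V} and R is weight-zero, then the associated face weights satisfy Σ_g W(a,g,c,d,z) W(a,b,c,g,−z) = δ_{b,d} Id_{V[d−a]⊗V[c−d]}, where the sum is over weights g with g−a and c−g weights of V. -/
/-!
Conjugation by the flip turns `W(a,b,c,g,−z)` into `(E[b−a] ⊗ E[c−b]) R^{(21)}(−z)` restricted to
`V[c−g] ⊗ V[g−a]`, so the product in the sum factors through the projection `E[c−g] ⊗ E[g−a]`.
As `g − a` runs over the weights of `V`, these projections add up to the projection onto the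
total weight `c − a`. Since `R` has weight zero, that projection commutes with `R(z)` and is
absorbed by `V[d−a] ⊗ V[c−d]`; the sum collapses to `(E[b−a] ⊗ E[c−b]) R^{(21)}(−z) R(z)`
on `V[d−a] ⊗ V[c−d]`, which unitarity reduces to `δ_{b,d}`.
-/

open Matrix Filter Topology
open scoped BigOperators

noncomputable section

/- The Cartan subalgebra `𝔥` is identified with `ℂ^m = Fin m → ℂ` via an
orthonormal basis `(h_ν)`; a diagonalizable `𝔥`-module is a space `ℂ^ι`
together with a weight function `wt : ι → (Fin m → ℂ)`; `λ ∈ 𝔥` acts on the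
basis vector `i` by the scalar `⟨wt i, λ⟩ = Σ_ν (wt i) ν * λ ν`. -/

variable {m : ℕ}

section Flip

variable {ι : Type*} [DecidableEq ι]

lemma flipP_eq_toMatrix : (flipP : Matrix (ι × ι) (ι × ι) ℂ) =
    (Equiv.prodComm ι ι).toPEquiv.toMatrix := by
  ext p q
  simp only [flipP, PEquiv.toMatrix_apply, Equiv.toPEquiv_apply, Option.mem_def,
    Option.some.injEq, Prod.ext_iff, Equiv.prodComm_apply, Prod.fst_swap, Prod.snd_swap]
  exact if_congr (by tauto) rfl rfl

lemma flipP_mul_mul_flipP [Fintype ι] (M : Matrix (ι × ι) (ι × ι) ℂ) :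
    flipP * M * flipP = reindexAlgEquiv ℂ ℂ (Equiv.prodComm ι ι) M := by
  rw [flipP_eq_toMatrix, PEquiv.toMatrix_toPEquiv_mul, PEquiv.mul_toMatrix_toPEquiv]
  rfl

end Flip

section Projections

variable {α β : Type*} [Fintype α] [Fintype β] [DecidableEq α] [DecidableEq β]

def totalWeightProj (wtA : α → (Fin m → ℂ)) (wtB : β → (Fin m → ℂ)) (s : Fin m → ℂ) :
    Matrix (α × β) (α × β) ℂ :=
  Matrix.diagonal fun p => if wtA p.1 + wtB p.2 = s then 1 else 0

lemma pairH_single (μ : Fin m → ℂ) (ν : Fin m) : pairH μ (Pi.single ν 1) = μ ν := by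
  simp [pairH, Pi.single_apply]

lemma WeightZero2.weight_eq_of_apply_ne_zero {wtA : α → (Fin m → ℂ)} {wtB : β → (Fin m → ℂ)}
    {F : Matrix (α × β) (α × β) ℂ} (hF : WeightZero2 wtA wtB F) {p q : α × β}
    (hpq : F p q ≠ 0) : wtA p.1 + wtB p.2 = wtA q.1 + wtB q.2 := by
  funext ν
  have h := congrFun (congrFun (hF (Pi.single ν 1)) p) q
  rw [Matrix.diagonal_mul, Matrix.mul_diagonal, mul_comm] at h
  simpa only [pairH_single, Pi.add_apply] using mul_left_cancel₀ hpq h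

lemma WeightZero2.commute_totalWeightProj {wtA : α → (Fin m → ℂ)} {wtB : β → (Fin m → ℂ)}
    {F : Matrix (α × β) (α × β) ℂ} (hF : WeightZero2 wtA wtB F) (s : Fin m → ℂ) :
    totalWeightProj wtA wtB s * F = F * totalWeightProj wtA wtB s := by
  ext p q
  rw [totalWeightProj, Matrix.diagonal_mul, Matrix.mul_diagonal]
  by_cases hpq : F p q = 0
  · simp [hpq]
  · rw [hF.weight_eq_of_apply_ne_zero hpq, mul_comm]

end Projections

section FaceWeights

variable {ι : Type*} [Fintype ι] [DecidableEq ι]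

lemma projK_mul_projK (wt : ι → (Fin m → ℂ)) (μ ν μ' ν' : Fin m → ℂ) :
    projK wt μ ν * projK wt μ' ν' = if μ = μ' ∧ ν = ν' then projK wt μ ν else 0 := by
  rw [projK, projK, Matrix.diagonal_mul_diagonal]
  split_ifs with h
  · obtain ⟨rfl, rfl⟩ := h
    congr 1
    funext p
    split_ifs <;> simp
  · rw [← Matrix.diagonal_zero]
    congr 1
    funext p
    split_ifs <;> simp_all

@[simp]
lemma projK_mul_self (wt : ι → (Fin m → ℂ)) (μ ν : Fin m → ℂ) :
    projK wt μ ν * projK wt μ ν = projK wt μ ν := by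
  simp [projK_mul_projK]

lemma reindex_prodComm_projK (wt : ι → (Fin m → ℂ)) (μ ν : Fin m → ℂ) :
    reindexAlgEquiv ℂ ℂ (Equiv.prodComm ι ι) (projK wt μ ν) = projK wt ν μ := by
  simp only [coe_reindexAlgEquiv, reindex_apply, projK, submatrix_diagonal_equiv]
  congr 1
  funext p
  simp only [Function.comp_apply, Equiv.prodComm_symm, Equiv.prodComm_apply, Prod.fst_swap,
    Prod.snd_swap]
  exact mul_comm _ _

lemma sum_projK_eq_totalWeightProj (wt : ι → (Fin m → ℂ)) (a c : Fin m → ℂ) :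
    ∑ g ∈ Finset.univ.image (fun i => a + wt i), projK wt (c - g) (g - a) =
      totalWeightProj wt wt (c - a) := by
  simp only [projK, totalWeightProj, ← diagonalAddMonoidHom_apply, ← map_sum]
  congr 1
  funext p
  rw [Finset.sum_apply, Finset.sum_eq_single_of_mem (a + wt p.2)
    (Finset.mem_image_of_mem (fun i => a + wt i) (Finset.mem_univ p.2))]
  · simp only [add_sub_cancel_left, if_true, mul_one, sub_add_eq_sub_sub, eq_sub_iff_add_eq]
  · intro g _ hg
    rw [if_neg (c := wt p.2 = g - a) (fun h => hg (by rw [h, add_sub_cancel])), mul_zero]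

lemma totalWeightProj_mul_projK (wt : ι → (Fin m → ℂ)) {μ ν s : Fin m → ℂ} (h : μ + ν = s) :
    totalWeightProj wt wt s * projK wt μ ν = projK wt μ ν := by
  rw [totalWeightProj, projK, Matrix.diagonal_mul_diagonal]
  congr 1
  funext p
  split_ifs <;> simp_all

lemma flipP_mul_face_mul_flipP (wt : ι → (Fin m → ℂ)) (η : ℂ)
    (R : ℂ → (Fin m → ℂ) → Matrix (ι × ι) (ι × ι) ℂ) (a b c d : Fin m → ℂ) (z : ℂ)
    (lam : Fin m → ℂ) :
    flipP * face wt η R a b c d z lam * flipP =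
      projK wt (b - a) (c - b) * (flipP * R z (lam + η • a + η • c) * flipP) *
        projK wt (c - d) (d - a) := by
  simp only [face, flipP_mul_mul_flipP, map_mul, reindex_prodComm_projK]

lemma projK_sub_mul_projK_sub (wt : ι → (Fin m → ℂ)) (a b c d : Fin m → ℂ) :
    projK wt (b - a) (c - b) * projK wt (d - a) (c - d) =
      if b = d then projK wt (d - a) (c - d) else 0 := by
  rw [projK_mul_projK]
  by_cases hbd : b = d <;> simp [hbd]

end FaceWeights

/-- if `R` is weight zero and unitary,
`R(z,λ) R^{(21)}(−z,λ) = Id`, then the associated face weights satisfy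
`Σ_g W(a,g,c,d,z) W(a,b,c,g,−z) = δ_{b,d} Id_{V[d−a]⊗V[c−d]}` (the sum over
`g` with `g−a` a weight of `V`; the composition of the two face weights is
taken through the flip identification `V[g−a]⊗V[c−g] ≅ V[c−g]⊗V[g−a]`). -/
theorem face_unitarity
    {ι : Type*} [Fintype ι] [DecidableEq ι]
    (wt : ι → (Fin m → ℂ)) (η : ℂ)
    (R : ℂ → (Fin m → ℂ) → Matrix (ι × ι) (ι × ι) ℂ)
    (hwz : ∀ z lam, WeightZero2 wt wt (R z lam))
    (hunit : RUnitary R)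
    (a b c d : Fin m → ℂ) (z : ℂ) :
    ∑ g ∈ Finset.univ.image (fun i => a + wt i),
        (flipP * face0 wt η R a b c g (-z) * flipP) * face0 wt η R a g c d z =
      if b = d then projK wt (d - a) (c - d) else 0 := by
  simp only [face0, flipP_mul_face_mul_flipP]
  simp only [face]
  set lam := 0 + η • a + η • c
  set Rt := flipP * R (-z) lam * flipP
  calc ∑ g ∈ Finset.univ.image (fun i => a + wt i),
        projK wt (b - a) (c - b) * Rt * projK wt (c - g) (g - a) *
          (projK wt (c - g) (g - a) * R z lam * projK wt (d - a) (c - d))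
      = projK wt (b - a) (c - b) * Rt *
          (∑ g ∈ Finset.univ.image (fun i => a + wt i), projK wt (c - g) (g - a)) *
          (R z lam * projK wt (d - a) (c - d)) := by
        rw [Finset.mul_sum, Finset.sum_mul]
        refine Finset.sum_congr rfl fun g _ => ?_
        conv_rhs => rw [← projK_mul_self wt (c - g) (g - a)]
        simp only [mul_assoc]
    _ = projK wt (b - a) (c - b) * (Rt * R z lam) * projK wt (d - a) (c - d) := by
        simp only [sum_projK_eq_totalWeightProj, mul_assoc]
        rw [← mul_assoc (totalWeightProj _ _ _), (hwz z lam).commute_totalWeightProj,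
          mul_assoc (R z lam), totalWeightProj_mul_projK wt (sub_add_sub_cancel' d a c)]
    _ = _ := by
        rw [mul_eq_one_comm.mp (hunit z lam), mul_one, projK_sub_mul_projK_sub]
end
end
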